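/- Let u be a solution of the elliptic Euler–Darboux equation on an open set U ⊆ ℝ² with x + y ≠ 0 on U. Then each of the following functions is also a solution of the elliptic Euler–Darboux equation on U: v₆(x,y) = −u_x + u_y; v₇(x,y) = u + 2x·u_x + 2y·u_y; v₈(x,y) = (x−y)·u + (x² − 2xy − y²)·u_x + (x² + 2xy − y²)·u_y. -/

import Mathlib

/-- Partial derivative of a real-valued function on `ℝ²` in the direction `v`. -/
noncomputable def pdv (v : ℝ × ℝ) (f : ℝ × ℝ → ℝ) : ℝ × ℝ → ℝ := fun p => fderiv ℝ f p v

/-- Partial derivative with respect to the first coordinate (`x`). -/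
noncomputable def px : (ℝ × ℝ → ℝ) → ℝ × ℝ → ℝ := pdv (1, 0)

/-- Partial derivative with respect to the second coordinate (`y`). -/
noncomputable def py : (ℝ × ℝ → ℝ) → ℝ × ℝ → ℝ := pdv (0, 1)

/-- `u` is a solution of the elliptic Euler–Darboux equation
`(x+y)(u_xx + u_yy) + u_x + u_y = 0` on `U`. -/
def IsEDSolution (U : Set (ℝ × ℝ)) (u : ℝ × ℝ → ℝ) : Prop :=
  ContDiffOn ℝ (⊤ : ℕ∞) u U ∧
    ∀ p ∈ U, (p.1 + p.2) * (px (px u) p + py (py u) p) + px u p + py u p = 0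

section Helpers

lemma pdv_congr {f g : ℝ × ℝ → ℝ} {p : ℝ × ℝ} (h : f =ᶠ[nhds p] g) (v : ℝ × ℝ) :
    pdv v f p = pdv v g p := by unfold pdv; rw [h.fderiv_eq]

lemma pdv_eqOn {U : Set (ℝ × ℝ)} (hU : IsOpen U) {f g : ℝ × ℝ → ℝ}
    (h : ∀ q ∈ U, f q = g q) {p : ℝ × ℝ} (hp : p ∈ U) (v : ℝ × ℝ) :
    pdv v f p = pdv v g p :=
  pdv_congr (Filter.eventuallyEq_of_mem (hU.mem_nhds hp) h) v

lemma pdv_congr_fun {f g : ℝ × ℝ → ℝ} (h : ∀ q, f q = g q) (p v : ℝ × ℝ) :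
    pdv v f p = pdv v g p := by rw [show f = g from funext h]

lemma contDiffOn_pdv {U : Set (ℝ × ℝ)} (hU : IsOpen U) {f : ℝ × ℝ → ℝ}
    (hf : ContDiffOn ℝ (⊤ : ℕ∞) f U) (v : ℝ × ℝ) : ContDiffOn ℝ (⊤ : ℕ∞) (pdv v f) U := by
  have h1 : ContDiffOn ℝ (⊤ : ℕ∞) (fderiv ℝ f) U := hf.fderiv_of_isOpen hU (by simp)
  exact h1.clm_apply contDiffOn_const

lemma pdv_add {f g : ℝ × ℝ → ℝ} {p : ℝ × ℝ} (hf : DifferentiableAt ℝ f p)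
    (hg : DifferentiableAt ℝ g p) (v : ℝ × ℝ) :
    pdv v (fun q => f q + g q) p = pdv v f p + pdv v g p := by
  simp [pdv, fderiv_fun_add hf hg]

lemma pdv_mul {f g : ℝ × ℝ → ℝ} {p : ℝ × ℝ} (hf : DifferentiableAt ℝ f p)
    (hg : DifferentiableAt ℝ g p) (v : ℝ × ℝ) :
    pdv v (fun q => f q * g q) p = f p * pdv v g p + g p * pdv v f p := by
  simp [pdv, fderiv_fun_mul hf hg]

lemma pdv_const_mul {f : ℝ × ℝ → ℝ} {p : ℝ × ℝ} (c : ℝ) (hf : DifferentiableAt ℝ f p)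
    (v : ℝ × ℝ) : pdv v (fun q => c * f q) p = c * pdv v f p := by
  simp [pdv, fderiv_const_mul hf]

lemma pdv_constf (c : ℝ) (p v : ℝ × ℝ) : pdv v (fun _ : ℝ × ℝ => c) p = 0 := by
  simp [pdv]

lemma pdv_fst (p v : ℝ × ℝ) : pdv v (fun q : ℝ × ℝ => q.1) p = v.1 := by
  have h : HasFDerivAt (fun q : ℝ × ℝ => q.1) (ContinuousLinearMap.fst ℝ ℝ ℝ) p := hasFDerivAt_fst
  simp [pdv, h.fderiv]

lemma pdv_snd (p v : ℝ × ℝ) : pdv v (fun q : ℝ × ℝ => q.2) p = v.2 := by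
  have h : HasFDerivAt (fun q : ℝ × ℝ => q.2) (ContinuousLinearMap.snd ℝ ℝ ℝ) p := hasFDerivAt_snd
  simp [pdv, h.fderiv]

lemma pdv_comm {U : Set (ℝ × ℝ)} (hU : IsOpen U) {f : ℝ × ℝ → ℝ}
    (hf : ContDiffOn ℝ (⊤ : ℕ∞) f U) {p : ℝ × ℝ} (hp : p ∈ U) (v w : ℝ × ℝ) :
    pdv v (pdv w f) p = pdv w (pdv v f) p := by
  have hf' : ContDiffOn ℝ (⊤ : ℕ∞) (fderiv ℝ f) U := hf.fderiv_of_isOpen hU (by simp)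
  have hd' : DifferentiableAt ℝ (fderiv ℝ f) p :=
    ((hf'.contDiffAt (hU.mem_nhds hp)).differentiableAt (by simp))
  have hev : ∀ᶠ y in nhds p, HasFDerivAt f (fderiv ℝ f y) y := by
    filter_upwards [hU.mem_nhds hp] with y hy
    exact ((hf.contDiffAt (hU.mem_nhds hy)).differentiableAt (by simp)).hasFDerivAt
  have hsym := second_derivative_symmetric_of_eventually hev hd'.hasFDerivAt v w
  have key : ∀ a b : ℝ × ℝ, pdv a (pdv b f) p = fderiv ℝ (fderiv ℝ f) p a b := by
    intro a b
    have h1 : pdv b f = fun q => (fderiv ℝ f q) b := rfl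
    rw [h1]
    unfold pdv
    rw [fderiv_clm_apply hd' (differentiableAt_const b)]
    simp
  rw [key, key, hsym]

lemma pdv_poly (a b c d e : ℝ) (p v : ℝ × ℝ) :
    pdv v (fun s : ℝ × ℝ => a*(s.1*s.1) + b*(s.1*s.2) + c*(s.2*s.2) + d*s.1 + e*s.2) p
      = a*(2*p.1*v.1) + b*(p.2*v.1 + p.1*v.2) + c*(2*p.2*v.2) + d*v.1 + e*v.2 := by
  have dx : DifferentiableAt ℝ (fun s : ℝ × ℝ => s.1) p := by fun_prop
  have dy : DifferentiableAt ℝ (fun s : ℝ × ℝ => s.2) p := by fun_prop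
  have s1 : pdv v (fun s : ℝ × ℝ => a*(s.1*s.1) + b*(s.1*s.2) + c*(s.2*s.2) + d*s.1 + e*s.2) p
      = pdv v (fun s : ℝ × ℝ => a*(s.1*s.1) + b*(s.1*s.2) + c*(s.2*s.2) + d*s.1) p
        + pdv v (fun s : ℝ × ℝ => e*s.2) p := pdv_add (by fun_prop) (by fun_prop) v
  have s2 : pdv v (fun s : ℝ × ℝ => a*(s.1*s.1) + b*(s.1*s.2) + c*(s.2*s.2) + d*s.1) p
      = pdv v (fun s : ℝ × ℝ => a*(s.1*s.1) + b*(s.1*s.2) + c*(s.2*s.2)) p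
        + pdv v (fun s : ℝ × ℝ => d*s.1) p := pdv_add (by fun_prop) (by fun_prop) v
  have s3 : pdv v (fun s : ℝ × ℝ => a*(s.1*s.1) + b*(s.1*s.2) + c*(s.2*s.2)) p
      = pdv v (fun s : ℝ × ℝ => a*(s.1*s.1) + b*(s.1*s.2)) p
        + pdv v (fun s : ℝ × ℝ => c*(s.2*s.2)) p := pdv_add (by fun_prop) (by fun_prop) v
  have s4 : pdv v (fun s : ℝ × ℝ => a*(s.1*s.1) + b*(s.1*s.2)) p
      = pdv v (fun s : ℝ × ℝ => a*(s.1*s.1)) p + pdv v (fun s : ℝ × ℝ => b*(s.1*s.2)) p :=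
    pdv_add (by fun_prop) (by fun_prop) v
  have m1 : pdv v (fun s : ℝ × ℝ => a*(s.1*s.1)) p = a * pdv v (fun s : ℝ × ℝ => s.1*s.1) p :=
    pdv_const_mul a (by fun_prop) v
  have m2 : pdv v (fun s : ℝ × ℝ => b*(s.1*s.2)) p = b * pdv v (fun s : ℝ × ℝ => s.1*s.2) p :=
    pdv_const_mul b (by fun_prop) v
  have m3 : pdv v (fun s : ℝ × ℝ => c*(s.2*s.2)) p = c * pdv v (fun s : ℝ × ℝ => s.2*s.2) p :=
    pdv_const_mul c (by fun_prop) v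
  have m4 : pdv v (fun s : ℝ × ℝ => d*s.1) p = d * pdv v (fun s : ℝ × ℝ => s.1) p :=
    pdv_const_mul d dx v
  have m5 : pdv v (fun s : ℝ × ℝ => e*s.2) p = e * pdv v (fun s : ℝ × ℝ => s.2) p :=
    pdv_const_mul e dy v
  have q1 : pdv v (fun s : ℝ × ℝ => s.1*s.1) p
      = p.1 * pdv v (fun s : ℝ × ℝ => s.1) p + p.1 * pdv v (fun s : ℝ × ℝ => s.1) p :=
    pdv_mul dx dx v
  have q2 : pdv v (fun s : ℝ × ℝ => s.1*s.2) p
      = p.1 * pdv v (fun s : ℝ × ℝ => s.2) p + p.2 * pdv v (fun s : ℝ × ℝ => s.1) p :=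
    pdv_mul dx dy v
  have q3 : pdv v (fun s : ℝ × ℝ => s.2*s.2) p
      = p.2 * pdv v (fun s : ℝ × ℝ => s.2) p + p.2 * pdv v (fun s : ℝ × ℝ => s.2) p :=
    pdv_mul dy dy v
  rw [s1, s2, s3, s4, m1, m2, m3, m4, m5, q1, q2, q3, pdv_fst, pdv_snd]
  ring

lemma px_poly (a b c d e : ℝ) {f : ℝ × ℝ → ℝ}
    (hf : ∀ s, f s = a*(s.1*s.1) + b*(s.1*s.2) + c*(s.2*s.2) + d*s.1 + e*s.2) (q : ℝ × ℝ) :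
    px f q = a*(2*q.1) + b*q.2 + d := by
  calc px f q
      = pdv (1,0) (fun s : ℝ × ℝ => a*(s.1*s.1) + b*(s.1*s.2) + c*(s.2*s.2) + d*s.1 + e*s.2) q :=
        pdv_congr_fun hf q (1,0)
    _ = a*(2*q.1*(1:ℝ)) + b*(q.2*1 + q.1*0) + c*(2*q.2*0) + d*1 + e*0 := pdv_poly a b c d e q (1,0)
    _ = a*(2*q.1) + b*q.2 + d := by ring

lemma py_poly (a b c d e : ℝ) {f : ℝ × ℝ → ℝ}
    (hf : ∀ s, f s = a*(s.1*s.1) + b*(s.1*s.2) + c*(s.2*s.2) + d*s.1 + e*s.2) (q : ℝ × ℝ) :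
    py f q = b*q.1 + c*(2*q.2) + e := by
  calc py f q
      = pdv (0,1) (fun s : ℝ × ℝ => a*(s.1*s.1) + b*(s.1*s.2) + c*(s.2*s.2) + d*s.1 + e*s.2) q :=
        pdv_congr_fun hf q (0,1)
    _ = a*(2*q.1*(0:ℝ)) + b*(q.2*0 + q.1*1) + c*(2*q.2*1) + d*0 + e*1 := pdv_poly a b c d e q (0,1)
    _ = b*q.1 + c*(2*q.2) + e := by ring

lemma pdv_comb3 {a1 f1 a2 f2 a3 f3 : ℝ × ℝ → ℝ} {p : ℝ × ℝ}
    (da1 : DifferentiableAt ℝ a1 p) (df1 : DifferentiableAt ℝ f1 p)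
    (da2 : DifferentiableAt ℝ a2 p) (df2 : DifferentiableAt ℝ f2 p)
    (da3 : DifferentiableAt ℝ a3 p) (df3 : DifferentiableAt ℝ f3 p) (v : ℝ × ℝ) :
    pdv v (fun q => a1 q * f1 q + a2 q * f2 q + a3 q * f3 q) p
      = (a1 p * pdv v f1 p + f1 p * pdv v a1 p) + (a2 p * pdv v f2 p + f2 p * pdv v a2 p)
        + (a3 p * pdv v f3 p + f3 p * pdv v a3 p) := by
  have s1 : pdv v (fun q => a1 q * f1 q + a2 q * f2 q + a3 q * f3 q) p
      = pdv v (fun q => a1 q * f1 q + a2 q * f2 q) p + pdv v (fun q => a3 q * f3 q) p :=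
    pdv_add ((da1.mul df1).add (da2.mul df2)) (da3.mul df3) v
  have s2 : pdv v (fun q => a1 q * f1 q + a2 q * f2 q) p
      = pdv v (fun q => a1 q * f1 q) p + pdv v (fun q => a2 q * f2 q) p :=
    pdv_add (da1.mul df1) (da2.mul df2) v
  rw [s1, s2, pdv_mul da1 df1, pdv_mul da2 df2, pdv_mul da3 df3]

lemma pdv_comb5 {a1 f1 a2 f2 a3 f3 a4 f4 a5 f5 : ℝ × ℝ → ℝ} {p : ℝ × ℝ}
    (da1 : DifferentiableAt ℝ a1 p) (df1 : DifferentiableAt ℝ f1 p)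
    (da2 : DifferentiableAt ℝ a2 p) (df2 : DifferentiableAt ℝ f2 p)
    (da3 : DifferentiableAt ℝ a3 p) (df3 : DifferentiableAt ℝ f3 p)
    (da4 : DifferentiableAt ℝ a4 p) (df4 : DifferentiableAt ℝ f4 p)
    (da5 : DifferentiableAt ℝ a5 p) (df5 : DifferentiableAt ℝ f5 p) (v : ℝ × ℝ) :
    pdv v (fun q => a1 q * f1 q + a2 q * f2 q + a3 q * f3 q + a4 q * f4 q + a5 q * f5 q) p
      = (a1 p * pdv v f1 p + f1 p * pdv v a1 p) + (a2 p * pdv v f2 p + f2 p * pdv v a2 p)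
        + (a3 p * pdv v f3 p + f3 p * pdv v a3 p) + (a4 p * pdv v f4 p + f4 p * pdv v a4 p)
        + (a5 p * pdv v f5 p + f5 p * pdv v a5 p) := by
  have s1 : pdv v (fun q => a1 q * f1 q + a2 q * f2 q + a3 q * f3 q + a4 q * f4 q + a5 q * f5 q) p
      = pdv v (fun q => a1 q * f1 q + a2 q * f2 q + a3 q * f3 q + a4 q * f4 q) p
        + pdv v (fun q => a5 q * f5 q) p :=
    pdv_add ((((da1.mul df1).add (da2.mul df2)).add (da3.mul df3)).add (da4.mul df4))
      (da5.mul df5) v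
  have s2 : pdv v (fun q => a1 q * f1 q + a2 q * f2 q + a3 q * f3 q + a4 q * f4 q) p
      = pdv v (fun q => a1 q * f1 q + a2 q * f2 q + a3 q * f3 q) p
        + pdv v (fun q => a4 q * f4 q) p :=
    pdv_add (((da1.mul df1).add (da2.mul df2)).add (da3.mul df3)) (da4.mul df4) v
  have s3 : pdv v (fun q => a1 q * f1 q + a2 q * f2 q + a3 q * f3 q) p
      = pdv v (fun q => a1 q * f1 q + a2 q * f2 q) p + pdv v (fun q => a3 q * f3 q) p :=
    pdv_add ((da1.mul df1).add (da2.mul df2)) (da3.mul df3) v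
  have s4 : pdv v (fun q => a1 q * f1 q + a2 q * f2 q) p
      = pdv v (fun q => a1 q * f1 q) p + pdv v (fun q => a2 q * f2 q) p :=
    pdv_add (da1.mul df1) (da2.mul df2) v
  rw [s1, s2, s3, s4, pdv_mul da1 df1, pdv_mul da2 df2, pdv_mul da3 df3, pdv_mul da4 df4,
    pdv_mul da5 df5]

-- coefficient catalogue
lemma px_constL (c : ℝ) (q : ℝ × ℝ) : px (fun _ : ℝ × ℝ => c) q = 0 := pdv_constf c q (1,0)
lemma py_constL (c : ℝ) (q : ℝ × ℝ) : py (fun _ : ℝ × ℝ => c) q = 0 := pdv_constf c q (0,1)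

lemma kx_sum (q : ℝ × ℝ) : px (fun s : ℝ × ℝ => s.1 + s.2) q = 1 := by
  have h := px_poly (f := fun s : ℝ × ℝ => s.1 + s.2) 0 0 0 1 1 (fun s => by ring) q
  rw [h]; ring
lemma ky_sum (q : ℝ × ℝ) : py (fun s : ℝ × ℝ => s.1 + s.2) q = 1 := by
  have h := py_poly (f := fun s : ℝ × ℝ => s.1 + s.2) 0 0 0 1 1 (fun s => by ring) q
  rw [h]; ring
lemma kx_dif (q : ℝ × ℝ) : px (fun s : ℝ × ℝ => s.1 - s.2) q = 1 := by
  have h := px_poly (f := fun s : ℝ × ℝ => s.1 - s.2) 0 0 0 1 (-1) (fun s => by ring) q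
  rw [h]; ring
lemma ky_dif (q : ℝ × ℝ) : py (fun s : ℝ × ℝ => s.1 - s.2) q = -1 := by
  have h := py_poly (f := fun s : ℝ × ℝ => s.1 - s.2) 0 0 0 1 (-1) (fun s => by ring) q
  rw [h]; ring
lemma kx_2x (q : ℝ × ℝ) : px (fun s : ℝ × ℝ => 2*s.1) q = 2 := by
  have h := px_poly (f := fun s : ℝ × ℝ => 2*s.1) 0 0 0 2 0 (fun s => by ring) q
  rw [h]; ring
lemma ky_2x (q : ℝ × ℝ) : py (fun s : ℝ × ℝ => 2*s.1) q = 0 := by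
  have h := py_poly (f := fun s : ℝ × ℝ => 2*s.1) 0 0 0 2 0 (fun s => by ring) q
  rw [h]; ring
lemma kx_2y (q : ℝ × ℝ) : px (fun s : ℝ × ℝ => 2*s.2) q = 0 := by
  have h := px_poly (f := fun s : ℝ × ℝ => 2*s.2) 0 0 0 0 2 (fun s => by ring) q
  rw [h]; ring
lemma ky_2y (q : ℝ × ℝ) : py (fun s : ℝ × ℝ => 2*s.2) q = 2 := by
  have h := py_poly (f := fun s : ℝ × ℝ => 2*s.2) 0 0 0 0 2 (fun s => by ring) q
  rw [h]; ring
lemma kx_3d (q : ℝ × ℝ) : px (fun s : ℝ × ℝ => 3*s.1 - 3*s.2) q = 3 := by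
  have h := px_poly (f := fun s : ℝ × ℝ => 3*s.1 - 3*s.2) 0 0 0 3 (-3) (fun s => by ring) q
  rw [h]; ring
lemma ky_3d (q : ℝ × ℝ) : py (fun s : ℝ × ℝ => 3*s.1 - 3*s.2) q = -3 := by
  have h := py_poly (f := fun s : ℝ × ℝ => 3*s.1 - 3*s.2) 0 0 0 3 (-3) (fun s => by ring) q
  rw [h]; ring
lemma kx_2s (q : ℝ × ℝ) : px (fun s : ℝ × ℝ => 2*s.1 + 2*s.2) q = 2 := by
  have h := px_poly (f := fun s : ℝ × ℝ => 2*s.1 + 2*s.2) 0 0 0 2 2 (fun s => by ring) q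
  rw [h]; ring
lemma ky_m2s (q : ℝ × ℝ) : py (fun s : ℝ × ℝ => -2*s.1 - 2*s.2) q = -2 := by
  have h := py_poly (f := fun s : ℝ × ℝ => -2*s.1 - 2*s.2) 0 0 0 (-2) (-2) (fun s => by ring) q
  rw [h]; ring
lemma kx_P (q : ℝ × ℝ) : px (fun s : ℝ × ℝ => s.1^2 - 2*s.1*s.2 - s.2^2) q = 2*q.1 - 2*q.2 := by
  have h := px_poly (f := fun s : ℝ × ℝ => s.1^2 - 2*s.1*s.2 - s.2^2) 1 (-2) (-1) 0 0
    (fun s => by ring) q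
  rw [h]; ring
lemma ky_P (q : ℝ × ℝ) : py (fun s : ℝ × ℝ => s.1^2 - 2*s.1*s.2 - s.2^2) q = -2*q.1 - 2*q.2 := by
  have h := py_poly (f := fun s : ℝ × ℝ => s.1^2 - 2*s.1*s.2 - s.2^2) 1 (-2) (-1) 0 0
    (fun s => by ring) q
  rw [h]; ring
lemma kx_Q (q : ℝ × ℝ) : px (fun s : ℝ × ℝ => s.1^2 + 2*s.1*s.2 - s.2^2) q = 2*q.1 + 2*q.2 := by
  have h := px_poly (f := fun s : ℝ × ℝ => s.1^2 + 2*s.1*s.2 - s.2^2) 1 2 (-1) 0 0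
    (fun s => by ring) q
  rw [h]; ring
lemma ky_Q (q : ℝ × ℝ) : py (fun s : ℝ × ℝ => s.1^2 + 2*s.1*s.2 - s.2^2) q = 2*q.1 - 2*q.2 := by
  have h := py_poly (f := fun s : ℝ × ℝ => s.1^2 + 2*s.1*s.2 - s.2^2) 1 2 (-1) 0 0
    (fun s => by ring) q
  rw [h]; ring

end Helpers

/-- The point symmetries `X₆`, `X₇`, `X₈`: if `u` solves the elliptic Euler–Darboux
equation, so do `v₆ = −u_x + u_y`, `v₇ = u + 2x·u_x + 2y·u_y` and
`v₈ = (x−y)·u + (x² − 2xy − y²)·u_x + (x² + 2xy − y²)·u_y`. -/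
theorem ED_point_symmetries (U : Set (ℝ × ℝ)) (hU : IsOpen U)
    (hne : ∀ p ∈ U, p.1 + p.2 ≠ 0) (u : ℝ × ℝ → ℝ) (hu : IsEDSolution U u) :
    IsEDSolution U (fun p => -px u p + py u p) ∧
    IsEDSolution U (fun p => u p + 2 * p.1 * px u p + 2 * p.2 * py u p) ∧
    IsEDSolution U (fun p =>
      (p.1 - p.2) * u p + (p.1 ^ 2 - 2 * p.1 * p.2 - p.2 ^ 2) * px u p
        + (p.1 ^ 2 + 2 * p.1 * p.2 - p.2 ^ 2) * py u p) := by
  obtain ⟨hsm, hpde⟩ := hu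
  have dd : ∀ {f : ℝ × ℝ → ℝ}, ContDiffOn ℝ (⊤ : ℕ∞) f U → ∀ {q : ℝ × ℝ}, q ∈ U →
      DifferentiableAt ℝ f q :=
    fun {f} hf {q} hq => (hf.contDiffAt (hU.mem_nhds hq)).differentiableAt (by simp)
  have c1 : ContDiffOn ℝ (⊤ : ℕ∞) (px u) U := contDiffOn_pdv hU hsm (1,0)
  have c2 : ContDiffOn ℝ (⊤ : ℕ∞) (py u) U := contDiffOn_pdv hU hsm (0,1)
  have c11 : ContDiffOn ℝ (⊤ : ℕ∞) (px (px u)) U := contDiffOn_pdv hU c1 (1,0)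
  have c12 : ContDiffOn ℝ (⊤ : ℕ∞) (px (py u)) U := contDiffOn_pdv hU c2 (1,0)
  have c22 : ContDiffOn ℝ (⊤ : ℕ∞) (py (py u)) U := contDiffOn_pdv hU c2 (0,1)
  have r1 : ∀ q ∈ U, py (px u) q = px (py u) q := fun q hq => pdv_comm hU hsm hq (0,1) (1,0)
  have r3 : ∀ q ∈ U, py (px (py u)) q = px (py (py u)) q :=
    fun q hq => pdv_comm hU c2 hq (0,1) (1,0)
  have r2 : ∀ q ∈ U, py (px (px u)) q = px (px (py u)) q := by
    intro q hq
    calc py (px (px u)) q = px (py (px u)) q := pdv_comm hU c1 hq (0,1) (1,0)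
      _ = px (px (py u)) q := pdv_eqOn hU r1 hq (1,0)
  -- first derivatives of the PDE identity
  have hEx : ∀ p ∈ U, 2*px (px u) p + py (py u) p
      + (p.1+p.2)*(px (px (px u)) p + px (py (py u)) p) + px (py u) p = 0 := by
    intro p hp
    have h0 : px (fun q : ℝ × ℝ => (q.1 + q.2) * (px (px u) q + py (py u) q) + px u q + py u q) p
        = px (fun _ : ℝ × ℝ => (0:ℝ)) p := pdv_eqOn hU (fun q hq => hpde q hq) hp (1,0)
    have hz : px (fun _ : ℝ × ℝ => (0:ℝ)) p = 0 := pdv_constf 0 p (1,0)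
    have e0 : px (fun q : ℝ × ℝ => (q.1 + q.2) * (px (px u) q + py (py u) q) + px u q + py u q) p
        = px (fun q : ℝ × ℝ => (q.1 + q.2) * (px (px u) q + py (py u) q)
            + 1*px u q + 1*py u q) p := pdv_congr_fun (fun q => by ring) p (1,0)
    have e1 : px (fun q : ℝ × ℝ => (q.1 + q.2) * (px (px u) q + py (py u) q)
            + 1*px u q + 1*py u q) p
        = ((p.1+p.2) * px (fun q : ℝ × ℝ => px (px u) q + py (py u) q) p
            + (px (px u) p + py (py u) p) * px (fun s : ℝ × ℝ => s.1 + s.2) p)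
          + (1 * px (px u) p + px u p * px (fun _ : ℝ × ℝ => (1:ℝ)) p)
          + (1 * px (py u) p + py u p * px (fun _ : ℝ × ℝ => (1:ℝ)) p) :=
      pdv_comb3 (by fun_prop) ((dd c11 hp).add (dd c22 hp)) (by fun_prop) (dd c1 hp)
        (by fun_prop) (dd c2 hp) (1,0)
    have e2 : px (fun q : ℝ × ℝ => px (px u) q + py (py u) q) p
        = px (px (px u)) p + px (py (py u)) p := pdv_add (dd c11 hp) (dd c22 hp) (1,0)
    rw [e0, e1, e2, hz, kx_sum p, px_constL 1 p] at h0
    linarith [h0]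
  have hEy : ∀ p ∈ U, px (px u) p + 2*py (py u) p
      + (p.1+p.2)*(px (px (py u)) p + py (py (py u)) p) + px (py u) p = 0 := by
    intro p hp
    have h0 : py (fun q : ℝ × ℝ => (q.1 + q.2) * (px (px u) q + py (py u) q) + px u q + py u q) p
        = py (fun _ : ℝ × ℝ => (0:ℝ)) p := pdv_eqOn hU (fun q hq => hpde q hq) hp (0,1)
    have hz : py (fun _ : ℝ × ℝ => (0:ℝ)) p = 0 := pdv_constf 0 p (0,1)
    have e0 : py (fun q : ℝ × ℝ => (q.1 + q.2) * (px (px u) q + py (py u) q) + px u q + py u q) p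
        = py (fun q : ℝ × ℝ => (q.1 + q.2) * (px (px u) q + py (py u) q)
            + 1*px u q + 1*py u q) p := pdv_congr_fun (fun q => by ring) p (0,1)
    have e1 : py (fun q : ℝ × ℝ => (q.1 + q.2) * (px (px u) q + py (py u) q)
            + 1*px u q + 1*py u q) p
        = ((p.1+p.2) * py (fun q : ℝ × ℝ => px (px u) q + py (py u) q) p
            + (px (px u) p + py (py u) p) * py (fun s : ℝ × ℝ => s.1 + s.2) p)
          + (1 * py (px u) p + px u p * py (fun _ : ℝ × ℝ => (1:ℝ)) p)
          + (1 * py (py u) p + py u p * py (fun _ : ℝ × ℝ => (1:ℝ)) p) :=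
      pdv_comb3 (by fun_prop) ((dd c11 hp).add (dd c22 hp)) (by fun_prop) (dd c1 hp)
        (by fun_prop) (dd c2 hp) (0,1)
    have e2 : py (fun q : ℝ × ℝ => px (px u) q + py (py u) q) p
        = py (px (px u)) p + py (py (py u)) p := pdv_add (dd c11 hp) (dd c22 hp) (0,1)
    rw [e0, e1, e2, hz, ky_sum p, py_constL 1 p, r2 p hp, r1 p hp] at h0
    linarith [h0]
  -- smoothness of the three new functions
  have s6 : ContDiffOn ℝ (⊤ : ℕ∞) (fun p => -px u p + py u p) U := (c1.neg).add c2
  have s7 : ContDiffOn ℝ (⊤ : ℕ∞) (fun p => u p + 2 * p.1 * px u p + 2 * p.2 * py u p) U :=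
    (hsm.add ((contDiff_const.contDiffOn.mul contDiff_fst.contDiffOn).mul c1)).add
      ((contDiff_const.contDiffOn.mul contDiff_snd.contDiffOn).mul c2)
  have k1s : ContDiffOn ℝ (⊤ : ℕ∞) (fun s : ℝ × ℝ => s.1 - s.2) U :=
    (contDiff_fst.sub contDiff_snd).contDiffOn
  have k2s : ContDiffOn ℝ (⊤ : ℕ∞) (fun s : ℝ × ℝ => s.1 ^ 2 - 2 * s.1 * s.2 - s.2 ^ 2) U :=
    (((contDiff_fst.pow 2).sub ((contDiff_const.mul contDiff_fst).mul contDiff_snd)).sub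
      (contDiff_snd.pow 2)).contDiffOn
  have k3s : ContDiffOn ℝ (⊤ : ℕ∞) (fun s : ℝ × ℝ => s.1 ^ 2 + 2 * s.1 * s.2 - s.2 ^ 2) U :=
    (((contDiff_fst.pow 2).add ((contDiff_const.mul contDiff_fst).mul contDiff_snd)).sub
      (contDiff_snd.pow 2)).contDiffOn
  have s8 : ContDiffOn ℝ (⊤ : ℕ∞) (fun p => (p.1 - p.2) * u p
      + (p.1 ^ 2 - 2 * p.1 * p.2 - p.2 ^ 2) * px u p
      + (p.1 ^ 2 + 2 * p.1 * p.2 - p.2 ^ 2) * py u p) U :=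
    ((k1s.mul hsm).add (k2s.mul c1)).add (k3s.mul c2)
  refine ⟨⟨s6, ?_⟩, ⟨s7, ?_⟩, ⟨s8, ?_⟩⟩
  · -- v₆
    have e6x : ∀ q ∈ U, px (fun p => -px u p + py u p) q
        = -1*px (px u) q + 1*px (py u) q + 0*u q := by
      intro q hq
      have t0 : px (fun p => -px u p + py u p) q
          = px (fun r : ℝ × ℝ => -1*px u r + 1*py u r + 0*u r) q :=
        pdv_congr_fun (fun r => by ring) q (1,0)
      have t1 : px (fun r : ℝ × ℝ => -1*px u r + 1*py u r + 0*u r) q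
          = (-1 * px (px u) q + px u q * px (fun _ : ℝ × ℝ => (-1:ℝ)) q)
            + (1 * px (py u) q + py u q * px (fun _ : ℝ × ℝ => (1:ℝ)) q)
            + (0 * px u q + u q * px (fun _ : ℝ × ℝ => (0:ℝ)) q) :=
        pdv_comb3 (by fun_prop) (dd c1 hq) (by fun_prop) (dd c2 hq) (by fun_prop)
          (dd hsm hq) (1,0)
      rw [t0, t1, px_constL (-1) q, px_constL 1 q, px_constL 0 q]; ring
    have e6y : ∀ q ∈ U, py (fun p => -px u p + py u p) q
        = -1*px (py u) q + 1*py (py u) q + 0*u q := by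
      intro q hq
      have t0 : py (fun p => -px u p + py u p) q
          = py (fun r : ℝ × ℝ => -1*px u r + 1*py u r + 0*u r) q :=
        pdv_congr_fun (fun r => by ring) q (0,1)
      have t1 : py (fun r : ℝ × ℝ => -1*px u r + 1*py u r + 0*u r) q
          = (-1 * py (px u) q + px u q * py (fun _ : ℝ × ℝ => (-1:ℝ)) q)
            + (1 * py (py u) q + py u q * py (fun _ : ℝ × ℝ => (1:ℝ)) q)
            + (0 * py u q + u q * py (fun _ : ℝ × ℝ => (0:ℝ)) q) :=
        pdv_comb3 (by fun_prop) (dd c1 hq) (by fun_prop) (dd c2 hq) (by fun_prop)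
          (dd hsm hq) (0,1)
      rw [t0, t1, py_constL (-1) q, py_constL 1 q, py_constL 0 q, r1 q hq]; ring
    intro p hp
    have t2 : px (px (fun p => -px u p + py u p)) p
        = px (fun q : ℝ × ℝ => -1*px (px u) q + 1*px (py u) q + 0*u q) p :=
      pdv_eqOn hU e6x hp (1,0)
    have t3 : px (fun q : ℝ × ℝ => -1*px (px u) q + 1*px (py u) q + 0*u q) p
        = (-1 * px (px (px u)) p + px (px u) p * px (fun _ : ℝ × ℝ => (-1:ℝ)) p)
          + (1 * px (px (py u)) p + px (py u) p * px (fun _ : ℝ × ℝ => (1:ℝ)) p)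
          + (0 * px u p + u p * px (fun _ : ℝ × ℝ => (0:ℝ)) p) :=
      pdv_comb3 (by fun_prop) (dd c11 hp) (by fun_prop) (dd c12 hp) (by fun_prop)
        (dd hsm hp) (1,0)
    have hxx : px (px (fun p => -px u p + py u p)) p
        = -px (px (px u)) p + px (px (py u)) p := by
      rw [t2, t3, px_constL (-1) p, px_constL 1 p, px_constL 0 p]; ring
    have t4 : py (py (fun p => -px u p + py u p)) p
        = py (fun q : ℝ × ℝ => -1*px (py u) q + 1*py (py u) q + 0*u q) p :=
      pdv_eqOn hU e6y hp (0,1)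
    have t5 : py (fun q : ℝ × ℝ => -1*px (py u) q + 1*py (py u) q + 0*u q) p
        = (-1 * py (px (py u)) p + px (py u) p * py (fun _ : ℝ × ℝ => (-1:ℝ)) p)
          + (1 * py (py (py u)) p + py (py u) p * py (fun _ : ℝ × ℝ => (1:ℝ)) p)
          + (0 * py u p + u p * py (fun _ : ℝ × ℝ => (0:ℝ)) p) :=
      pdv_comb3 (by fun_prop) (dd c12 hp) (by fun_prop) (dd c22 hp) (by fun_prop)
        (dd hsm hp) (0,1)
    have hyy : py (py (fun p => -px u p + py u p)) p
        = -px (py (py u)) p + py (py (py u)) p := by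
      rw [t4, t5, py_constL (-1) p, py_constL 1 p, py_constL 0 p, r3 p hp]; ring
    rw [hxx, hyy, e6x p hp, e6y p hp]
    linear_combination (hEy p hp) - (hEx p hp)
  · -- v₇
    have e7x : ∀ q ∈ U, px (fun p => u p + 2 * p.1 * px u p + 2 * p.2 * py u p) q
        = 3*px u q + 2*q.1*px (px u) q + 2*q.2*px (py u) q := by
      intro q hq
      have t0 : px (fun p => u p + 2 * p.1 * px u p + 2 * p.2 * py u p) q
          = px (fun r : ℝ × ℝ => 1*u r + 2*r.1*px u r + 2*r.2*py u r) q :=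
        pdv_congr_fun (fun r => by ring) q (1,0)
      have t1 : px (fun r : ℝ × ℝ => 1*u r + 2*r.1*px u r + 2*r.2*py u r) q
          = (1 * px u q + u q * px (fun _ : ℝ × ℝ => (1:ℝ)) q)
            + (2*q.1 * px (px u) q + px u q * px (fun s : ℝ × ℝ => 2*s.1) q)
            + (2*q.2 * px (py u) q + py u q * px (fun s : ℝ × ℝ => 2*s.2) q) :=
        pdv_comb3 (by fun_prop) (dd hsm hq) (by fun_prop) (dd c1 hq) (by fun_prop)
          (dd c2 hq) (1,0)
      rw [t0, t1, px_constL 1 q, kx_2x q, kx_2y q]; ring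
    have e7y : ∀ q ∈ U, py (fun p => u p + 2 * p.1 * px u p + 2 * p.2 * py u p) q
        = 3*py u q + 2*q.1*px (py u) q + 2*q.2*py (py u) q := by
      intro q hq
      have t0 : py (fun p => u p + 2 * p.1 * px u p + 2 * p.2 * py u p) q
          = py (fun r : ℝ × ℝ => 1*u r + 2*r.1*px u r + 2*r.2*py u r) q :=
        pdv_congr_fun (fun r => by ring) q (0,1)
      have t1 : py (fun r : ℝ × ℝ => 1*u r + 2*r.1*px u r + 2*r.2*py u r) q
          = (1 * py u q + u q * py (fun _ : ℝ × ℝ => (1:ℝ)) q)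
            + (2*q.1 * py (px u) q + px u q * py (fun s : ℝ × ℝ => 2*s.1) q)
            + (2*q.2 * py (py u) q + py u q * py (fun s : ℝ × ℝ => 2*s.2) q) :=
        pdv_comb3 (by fun_prop) (dd hsm hq) (by fun_prop) (dd c1 hq) (by fun_prop)
          (dd c2 hq) (0,1)
      rw [t0, t1, py_constL 1 q, ky_2x q, ky_2y q, r1 q hq]; ring
    intro p hp
    have t2 : px (px (fun p => u p + 2 * p.1 * px u p + 2 * p.2 * py u p)) p
        = px (fun q : ℝ × ℝ => 3*px u q + 2*q.1*px (px u) q + 2*q.2*px (py u) q) p :=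
      pdv_eqOn hU e7x hp (1,0)
    have t3 : px (fun q : ℝ × ℝ => 3*px u q + 2*q.1*px (px u) q + 2*q.2*px (py u) q) p
        = (3 * px (px u) p + px u p * px (fun _ : ℝ × ℝ => (3:ℝ)) p)
          + (2*p.1 * px (px (px u)) p + px (px u) p * px (fun s : ℝ × ℝ => 2*s.1) p)
          + (2*p.2 * px (px (py u)) p + px (py u) p * px (fun s : ℝ × ℝ => 2*s.2) p) :=
      pdv_comb3 (by fun_prop) (dd c1 hp) (by fun_prop) (dd c11 hp) (by fun_prop)
        (dd c12 hp) (1,0)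
    have hxx : px (px (fun p => u p + 2 * p.1 * px u p + 2 * p.2 * py u p)) p
        = 5*px (px u) p + 2*p.1*px (px (px u)) p + 2*p.2*px (px (py u)) p := by
      rw [t2, t3, px_constL 3 p, kx_2x p, kx_2y p]; ring
    have t4 : py (py (fun p => u p + 2 * p.1 * px u p + 2 * p.2 * py u p)) p
        = py (fun q : ℝ × ℝ => 3*py u q + 2*q.1*px (py u) q + 2*q.2*py (py u) q) p :=
      pdv_eqOn hU e7y hp (0,1)
    have t5 : py (fun q : ℝ × ℝ => 3*py u q + 2*q.1*px (py u) q + 2*q.2*py (py u) q) p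
        = (3 * py (py u) p + py u p * py (fun _ : ℝ × ℝ => (3:ℝ)) p)
          + (2*p.1 * py (px (py u)) p + px (py u) p * py (fun s : ℝ × ℝ => 2*s.1) p)
          + (2*p.2 * py (py (py u)) p + py (py u) p * py (fun s : ℝ × ℝ => 2*s.2) p) :=
      pdv_comb3 (by fun_prop) (dd c2 hp) (by fun_prop) (dd c12 hp) (by fun_prop)
        (dd c22 hp) (0,1)
    have hyy : py (py (fun p => u p + 2 * p.1 * px u p + 2 * p.2 * py u p)) p
        = 5*py (py u) p + 2*p.1*px (py (py u)) p + 2*p.2*py (py (py u)) p := by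
      rw [t4, t5, py_constL 3 p, ky_2x p, ky_2y p, r3 p hp]; ring
    rw [hxx, hyy, e7x p hp, e7y p hp]
    linear_combination 3*(hpde p hp) + 2*p.1*(hEx p hp) + 2*p.2*(hEy p hp)
  · -- v₈
    have e8x : ∀ q ∈ U, px (fun p => (p.1 - p.2) * u p
          + (p.1 ^ 2 - 2 * p.1 * p.2 - p.2 ^ 2) * px u p
          + (p.1 ^ 2 + 2 * p.1 * p.2 - p.2 ^ 2) * py u p) q
        = 1*u q + (3*q.1-3*q.2)*px u q + (2*q.1+2*q.2)*py u q
          + (q.1^2-2*q.1*q.2-q.2^2)*px (px u) q + (q.1^2+2*q.1*q.2-q.2^2)*px (py u) q := by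
      intro q hq
      have t1 : px (fun p => (p.1 - p.2) * u p
            + (p.1 ^ 2 - 2 * p.1 * p.2 - p.2 ^ 2) * px u p
            + (p.1 ^ 2 + 2 * p.1 * p.2 - p.2 ^ 2) * py u p) q
          = ((q.1 - q.2) * px u q + u q * px (fun s : ℝ × ℝ => s.1 - s.2) q)
            + ((q.1 ^ 2 - 2 * q.1 * q.2 - q.2 ^ 2) * px (px u) q
              + px u q * px (fun s : ℝ × ℝ => s.1^2 - 2*s.1*s.2 - s.2^2) q)
            + ((q.1 ^ 2 + 2 * q.1 * q.2 - q.2 ^ 2) * px (py u) q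
              + py u q * px (fun s : ℝ × ℝ => s.1^2 + 2*s.1*s.2 - s.2^2) q) :=
        pdv_comb3 (by fun_prop) (dd hsm hq) (by fun_prop) (dd c1 hq) (by fun_prop)
          (dd c2 hq) (1,0)
      rw [t1, kx_dif q, kx_P q, kx_Q q]; ring
    have e8y : ∀ q ∈ U, py (fun p => (p.1 - p.2) * u p
          + (p.1 ^ 2 - 2 * p.1 * p.2 - p.2 ^ 2) * px u p
          + (p.1 ^ 2 + 2 * p.1 * p.2 - p.2 ^ 2) * py u p) q
        = -1*u q + (-2*q.1-2*q.2)*px u q + (3*q.1-3*q.2)*py u q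
          + (q.1^2-2*q.1*q.2-q.2^2)*px (py u) q + (q.1^2+2*q.1*q.2-q.2^2)*py (py u) q := by
      intro q hq
      have t1 : py (fun p => (p.1 - p.2) * u p
            + (p.1 ^ 2 - 2 * p.1 * p.2 - p.2 ^ 2) * px u p
            + (p.1 ^ 2 + 2 * p.1 * p.2 - p.2 ^ 2) * py u p) q
          = ((q.1 - q.2) * py u q + u q * py (fun s : ℝ × ℝ => s.1 - s.2) q)
            + ((q.1 ^ 2 - 2 * q.1 * q.2 - q.2 ^ 2) * py (px u) q
              + px u q * py (fun s : ℝ × ℝ => s.1^2 - 2*s.1*s.2 - s.2^2) q)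
            + ((q.1 ^ 2 + 2 * q.1 * q.2 - q.2 ^ 2) * py (py u) q
              + py u q * py (fun s : ℝ × ℝ => s.1^2 + 2*s.1*s.2 - s.2^2) q) :=
        pdv_comb3 (by fun_prop) (dd hsm hq) (by fun_prop) (dd c1 hq) (by fun_prop)
          (dd c2 hq) (0,1)
      rw [t1, ky_dif q, ky_P q, ky_Q q, r1 q hq]; ring
    intro p hp
    have t2 : px (px (fun p => (p.1 - p.2) * u p
          + (p.1 ^ 2 - 2 * p.1 * p.2 - p.2 ^ 2) * px u p
          + (p.1 ^ 2 + 2 * p.1 * p.2 - p.2 ^ 2) * py u p)) p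
        = px (fun q : ℝ × ℝ => 1*u q + (3*q.1-3*q.2)*px u q + (2*q.1+2*q.2)*py u q
          + (q.1^2-2*q.1*q.2-q.2^2)*px (px u) q + (q.1^2+2*q.1*q.2-q.2^2)*px (py u) q) p :=
      pdv_eqOn hU e8x hp (1,0)
    have t3 : px (fun q : ℝ × ℝ => 1*u q + (3*q.1-3*q.2)*px u q + (2*q.1+2*q.2)*py u q
          + (q.1^2-2*q.1*q.2-q.2^2)*px (px u) q + (q.1^2+2*q.1*q.2-q.2^2)*px (py u) q) p
        = (1 * px u p + u p * px (fun _ : ℝ × ℝ => (1:ℝ)) p)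
          + ((3*p.1-3*p.2) * px (px u) p + px u p * px (fun s : ℝ × ℝ => 3*s.1 - 3*s.2) p)
          + ((2*p.1+2*p.2) * px (py u) p + py u p * px (fun s : ℝ × ℝ => 2*s.1 + 2*s.2) p)
          + ((p.1^2-2*p.1*p.2-p.2^2) * px (px (px u)) p
            + px (px u) p * px (fun s : ℝ × ℝ => s.1^2 - 2*s.1*s.2 - s.2^2) p)
          + ((p.1^2+2*p.1*p.2-p.2^2) * px (px (py u)) p
            + px (py u) p * px (fun s : ℝ × ℝ => s.1^2 + 2*s.1*s.2 - s.2^2) p) :=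
      pdv_comb5 (by fun_prop) (dd hsm hp) (by fun_prop) (dd c1 hp) (by fun_prop) (dd c2 hp)
        (by fun_prop) (dd c11 hp) (by fun_prop) (dd c12 hp) (1,0)
    have hxx : px (px (fun p => (p.1 - p.2) * u p
          + (p.1 ^ 2 - 2 * p.1 * p.2 - p.2 ^ 2) * px u p
          + (p.1 ^ 2 + 2 * p.1 * p.2 - p.2 ^ 2) * py u p)) p
        = 4*px u p + 2*py u p + (5*p.1-5*p.2)*px (px u) p + (4*p.1+4*p.2)*px (py u) p
          + (p.1^2-2*p.1*p.2-p.2^2)*px (px (px u)) p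
          + (p.1^2+2*p.1*p.2-p.2^2)*px (px (py u)) p := by
      rw [t2, t3, px_constL 1 p, kx_3d p, kx_2s p, kx_P p, kx_Q p]; ring
    have t4 : py (py (fun p => (p.1 - p.2) * u p
          + (p.1 ^ 2 - 2 * p.1 * p.2 - p.2 ^ 2) * px u p
          + (p.1 ^ 2 + 2 * p.1 * p.2 - p.2 ^ 2) * py u p)) p
        = py (fun q : ℝ × ℝ => -1*u q + (-2*q.1-2*q.2)*px u q + (3*q.1-3*q.2)*py u q
          + (q.1^2-2*q.1*q.2-q.2^2)*px (py u) q + (q.1^2+2*q.1*q.2-q.2^2)*py (py u) q) p :=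
      pdv_eqOn hU e8y hp (0,1)
    have t5 : py (fun q : ℝ × ℝ => -1*u q + (-2*q.1-2*q.2)*px u q + (3*q.1-3*q.2)*py u q
          + (q.1^2-2*q.1*q.2-q.2^2)*px (py u) q + (q.1^2+2*q.1*q.2-q.2^2)*py (py u) q) p
        = (-1 * py u p + u p * py (fun _ : ℝ × ℝ => (-1:ℝ)) p)
          + ((-2*p.1-2*p.2) * py (px u) p + px u p * py (fun s : ℝ × ℝ => -2*s.1 - 2*s.2) p)
          + ((3*p.1-3*p.2) * py (py u) p + py u p * py (fun s : ℝ × ℝ => 3*s.1 - 3*s.2) p)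
          + ((p.1^2-2*p.1*p.2-p.2^2) * py (px (py u)) p
            + px (py u) p * py (fun s : ℝ × ℝ => s.1^2 - 2*s.1*s.2 - s.2^2) p)
          + ((p.1^2+2*p.1*p.2-p.2^2) * py (py (py u)) p
            + py (py u) p * py (fun s : ℝ × ℝ => s.1^2 + 2*s.1*s.2 - s.2^2) p) :=
      pdv_comb5 (by fun_prop) (dd hsm hp) (by fun_prop) (dd c1 hp) (by fun_prop) (dd c2 hp)
        (by fun_prop) (dd c12 hp) (by fun_prop) (dd c22 hp) (0,1)
    have hyy : py (py (fun p => (p.1 - p.2) * u p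
          + (p.1 ^ 2 - 2 * p.1 * p.2 - p.2 ^ 2) * px u p
          + (p.1 ^ 2 + 2 * p.1 * p.2 - p.2 ^ 2) * py u p)) p
        = -2*px u p - 4*py u p + (-4*p.1-4*p.2)*px (py u) p + (5*p.1-5*p.2)*py (py u) p
          + (p.1^2-2*p.1*p.2-p.2^2)*px (py (py u)) p
          + (p.1^2+2*p.1*p.2-p.2^2)*py (py (py u)) p := by
      rw [t4, t5, py_constL (-1) p, ky_m2s p, ky_3d p, ky_P p, ky_Q p, r1 p hp, r3 p hp]; ring
    rw [hxx, hyy, e8x p hp, e8y p hp]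
    linear_combination (3*(p.1-p.2))*(hpde p hp) + (p.1^2-2*p.1*p.2-p.2^2)*(hEx p hp)
      + (p.1^2+2*p.1*p.2-p.2^2)*(hEy p hp)
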